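/- arXiv:1902.00656 — 5 statements merged into one kernel-verified Lean document; each statement's English description precedes it below -/
import Mathlib

section
/- Let h : [0,R) → ℝ be smooth with h > 0 on (0,R), h'(0) = 1, h'' ≤ 0, and 0 < h' ≤ 1 on [0,R). Let m ≥ 1 be an integer, τ = m(n-2+m) with n ≥ 2, and let ψ : [0,R) → ℝ be a solution of (h^{n-1}ψ')' = τ h^{n-3} ψ on (0,R) with ψ(0) = 0 and ψ(r) = r^m + o(r^m) as r → 0⁺. Then for every r ∈ (0,R), h(r)ψ'(r) - m h'(r)ψ(r) ≥ 0; in particular ψ'(r)/ψ(r) ≥ m h'(r)/h(r). -/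
open Set Filter Topology Asymptotics

set_option maxHeartbeats 2000000 in
/-- Steklov lower bound, nonnegative curvature case: if `ψ` solves
`(h^{n-1} ψ')' = τ h^{n-1} ψ / h²` with `ψ(0) = 0` and `ψ(r) = r^m + o(r^m)` at `0⁺`,
where `τ = m(n-2+m)`, `h'' ≤ 0`, `0 < h' ≤ 1`, then
`h ψ' - m h' ψ ≥ 0` on `(0,R)`; in particular `ψ'/ψ ≥ m h'/h`. -/
theorem stmt2 (n m : ℕ) (hn : 2 ≤ n) (hm : 1 ≤ m) (R : ℝ) (hR : 0 < R)
    (h ψ : ℝ → ℝ) (τ : ℝ) (hτ : τ = (m : ℝ) * ((n : ℝ) - 2 + (m : ℝ)))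
    (hsm : ContDiffOn ℝ (⊤ : ℕ∞) h (Ico 0 R))
    (hpos : ∀ r ∈ Ioo 0 R, 0 < h r)
    (hd0 : deriv h 0 = 1)
    (hconc : ∀ r ∈ Ico 0 R, deriv (deriv h) r ≤ 0)
    (hder : ∀ r ∈ Ico 0 R, 0 < deriv h r ∧ deriv h r ≤ 1)
    (hψsm : ContDiffOn ℝ (⊤ : ℕ∞) ψ (Ico 0 R))
    (hODE : ∀ r ∈ Ioo 0 R,
        deriv (fun t => h t ^ (n - 1) * deriv ψ t) r =
          τ * h r ^ (n - 1) * ψ r / (h r) ^ 2)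
    (hψ0 : ψ 0 = 0)
    (hasym : (fun r => ψ r - r ^ m) =o[𝓝[>] 0] fun r => r ^ m) :
    ∀ r ∈ Ioo 0 R,
      0 ≤ h r * deriv ψ r - (m : ℝ) * deriv h r * ψ r ∧
      (m : ℝ) * deriv h r / h r ≤ deriv ψ r / ψ r := by
  obtain ⟨k, rfl⟩ : ∃ k, n = k + 2 := ⟨n - 2, by omega⟩
  obtain ⟨j, rfl⟩ : ∃ j, m = j + 1 := ⟨m - 1, by omega⟩
  have hexp : k + 2 - 1 = k + 1 := by omega
  simp only [hexp] at hODE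
  have hτ' : τ = ((j : ℝ) + 1) * ((k : ℝ) + (j : ℝ) + 1) := by
    rw [hτ]; push_cast; ring
  have hτpos : 0 < τ := by rw [hτ']; positivity
  set U : Set ℝ := Ioo 0 R with hU
  have hUo : IsOpen U := isOpen_Ioo
  have hUsub : U ⊆ Ico 0 R := Ioo_subset_Ico_self
  have hhU : ContDiffOn ℝ (⊤ : ℕ∞) h U := hsm.mono hUsub
  have hψU : ContDiffOn ℝ (⊤ : ℕ∞) ψ U := hψsm.mono hUsub
  have hh'U : ContDiffOn ℝ (⊤ : ℕ∞) (deriv h) U := hhU.deriv_of_isOpen hUo (by simp)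
  have hψ'U : ContDiffOn ℝ (⊤ : ℕ∞) (deriv ψ) U := hψU.deriv_of_isOpen hUo (by simp)
  -- HasDerivAt facts at interior points
  have Hh : ∀ r ∈ U, HasDerivAt h (deriv h r) r := fun r hr =>
    (((hhU.differentiableOn (by simp)).differentiableAt (hUo.mem_nhds hr)).hasDerivAt)
  have Hψ : ∀ r ∈ U, HasDerivAt ψ (deriv ψ r) r := fun r hr =>
    (((hψU.differentiableOn (by simp)).differentiableAt (hUo.mem_nhds hr)).hasDerivAt)
  have Hh2 : ∀ r ∈ U, HasDerivAt (deriv h) (deriv (deriv h) r) r := fun r hr =>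
    (((hh'U.differentiableOn (by simp)).differentiableAt (hUo.mem_nhds hr)).hasDerivAt)
  have Hψ2 : ∀ r ∈ U, HasDerivAt (deriv ψ) (deriv (deriv ψ) r) r := fun r hr =>
    (((hψ'U.differentiableOn (by simp)).differentiableAt (hUo.mem_nhds hr)).hasDerivAt)
  set P : ℝ → ℝ := fun t => h t ^ (k + 1) * deriv ψ t with hP
  have HPdiff : ∀ r ∈ U, DifferentiableAt ℝ P r := fun r hr =>
    (((Hh r hr).pow (k + 1)).mul (Hψ2 r hr)).differentiableAt
  have HP : ∀ r ∈ U, HasDerivAt P (τ * h r ^ (k + 1) * ψ r / h r ^ 2) r := by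
    intro r hr
    have := (HPdiff r hr).hasDerivAt
    rwa [hODE r hr] at this
  -- key sublemma: positivity of ψ on an initial interval implies positivity of P there
  have key : ∀ b, 0 < b → b ≤ R → (∀ s ∈ Ioo (0:ℝ) b, 0 < ψ s) →
      ∀ s ∈ Ioo (0:ℝ) b, 0 < P s := by
    intro b hb hbR hpsi
    have hsubU : Ioo (0:ℝ) b ⊆ U := Ioo_subset_Ioo le_rfl hbR
    have hPmono : StrictMonoOn P (Ioo (0:ℝ) b) := by
      apply strictMonoOn_of_deriv_pos (convex_Ioo _ _)
      · exact fun x hx => ((HPdiff x (hsubU hx)).continuousAt).continuousWithinAt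
      · intro x hx
        rw [interior_Ioo] at hx
        rw [(HP x (hsubU hx)).deriv]
        have h1 : 0 < h x := hpos x (hsubU hx)
        have h2 : 0 < ψ x := hpsi x hx
        positivity
    by_contra hc
    push_neg at hc
    obtain ⟨s₀, hs₀, hPs₀⟩ := hc
    have hneg : ∀ s ∈ Ioo (0:ℝ) s₀, deriv ψ s < 0 := by
      intro s hs
      have h1 : P s < P s₀ := hPmono ⟨hs.1, hs.2.trans hs₀.2⟩ hs₀ hs.2
      have h2 : 0 < h s := hpos s (hsubU ⟨hs.1, hs.2.trans hs₀.2⟩)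
      have h3 : h s ^ (k + 1) * deriv ψ s < 0 := h1.trans_le hPs₀
      nlinarith [pow_pos h2 (k + 1)]
    have hanti : StrictAntiOn ψ (Ioo (0:ℝ) s₀) := by
      apply strictAntiOn_of_deriv_neg (convex_Ioo _ _)
      · exact fun x hx =>
          ((Hψ x (hsubU ⟨hx.1, hx.2.trans hs₀.2⟩)).differentiableAt.continuousAt).continuousWithinAt
      · intro x hx; rw [interior_Ioo] at hx; exact hneg x hx
    set c := s₀ / 2 with hc
    have hcmem : c ∈ Ioo (0:ℝ) s₀ := ⟨half_pos hs₀.1, by linarith [hs₀.1]⟩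
    have hψc : 0 < ψ c := hpsi c ⟨hcmem.1, hcmem.2.trans hs₀.2⟩
    have htend : Tendsto ψ (𝓝[Ioo (0:ℝ) c] 0) (𝓝 0) := by
      have h1 : ContinuousWithinAt ψ (Ico 0 R) 0 := hψsm.continuousOn 0 ⟨le_rfl, hR⟩
      have h2 : Ioo (0:ℝ) c ⊆ Ico 0 R := fun x hx =>
        ⟨hx.1.le, lt_of_lt_of_le (hx.2.trans (hcmem.2.trans hs₀.2)) hbR⟩
      have h3 : Tendsto ψ (𝓝[Ioo (0:ℝ) c] 0) (𝓝 (ψ 0)) := h1.mono h2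
      rwa [hψ0] at h3
    have hNB : (𝓝[Ioo (0:ℝ) c] (0:ℝ)).NeBot := by
      rw [← mem_closure_iff_nhdsWithin_neBot, closure_Ioo (ne_of_lt hcmem.1)]
      exact ⟨le_rfl, hcmem.1.le⟩
    have hev : ∀ᶠ s in 𝓝[Ioo (0:ℝ) c] 0, ψ s < ψ c :=
      htend.eventually_lt_const hψc
    obtain ⟨s, hslt, hsmem⟩ := (hev.and self_mem_nhdsWithin).exists
    have : ψ c < ψ s := hanti ⟨hsmem.1, hsmem.2.trans hcmem.2⟩ hcmem hsmem.2
    linarith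
  -- positivity of ψ near 0 from the asymptotics
  have hsmall : ∃ ε > 0, ∀ s ∈ Ioo (0:ℝ) ε, 0 < ψ s := by
    have h2 := hasym.def (by norm_num : (0:ℝ) < 1/2)
    rw [eventually_iff] at h2
    obtain ⟨ε, hε, hsub⟩ := mem_nhdsGT_iff_exists_Ioo_subset.mp h2
    refine ⟨ε, hε, fun s hs => ?_⟩
    have h3 := hsub hs
    simp only [Real.norm_eq_abs, mem_setOf_eq] at h3
    have h4 : 0 < s ^ (j + 1) := pow_pos hs.1 _
    rw [abs_of_pos h4, abs_le] at h3
    nlinarith [h3.1]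
  -- global positivity of ψ
  have hψpos : ∀ r ∈ U, 0 < ψ r := by
    obtain ⟨ε, hε, hεpos⟩ := hsmall
    by_contra hcon
    push_neg at hcon
    obtain ⟨z₀, hz₀U, hz₀⟩ := hcon
    set Z : Set ℝ := {z | z ∈ U ∧ ψ z ≤ 0} with hZ
    have hZne : Z.Nonempty := ⟨z₀, hz₀U, hz₀⟩
    have hZbd : BddBelow Z := ⟨0, fun z hz => hz.1.1.le⟩
    set r₁ := sInf Z with hr₁
    have hεR : 0 < min ε R := lt_min hε hR
    have hlb : ∀ z ∈ Z, min ε R ≤ z := by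
      intro z hz
      by_contra hzc
      push_neg at hzc
      exact absurd (hεpos z ⟨hz.1.1, hzc.trans_le (min_le_left _ _)⟩) (not_lt.mpr hz.2)
    have hr₁ge : min ε R ≤ r₁ := le_csInf hZne hlb
    have hr₁lt : r₁ < R := by
      obtain ⟨z, hzZ⟩ := hZne
      exact lt_of_le_of_lt (csInf_le hZbd hzZ) hzZ.1.2
    have hr₁U : r₁ ∈ U := ⟨hεR.trans_le hr₁ge, hr₁lt⟩
    have hbelow : ∀ s ∈ Ioo (0:ℝ) r₁, 0 < ψ s := by
      intro s hs
      by_contra hsc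
      push_neg at hsc
      have : r₁ ≤ s := csInf_le hZbd ⟨⟨hs.1, hs.2.trans hr₁lt⟩, hsc⟩
      linarith [hs.2]
    have hψr₁ : ψ r₁ ≤ 0 := by
      by_contra hpc
      push_neg at hpc
      have hcont : ContinuousAt ψ r₁ :=
        (hψsm.continuousOn).continuousAt (Filter.mem_of_superset (hUo.mem_nhds hr₁U) hUsub)
      have hev : ∀ᶠ y in 𝓝 r₁, 0 < ψ y := hcont (Ioi_mem_nhds hpc)
      rw [Metric.eventually_nhds_iff] at hev
      obtain ⟨δ, hδ, hball⟩ := hev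
      have : r₁ + δ ≤ r₁ := by
        apply le_csInf hZne
        intro z hz
        have hz1 : r₁ ≤ z := csInf_le hZbd hz
        by_contra hzc
        push_neg at hzc
        have : dist z r₁ < δ := by
          rw [Real.dist_eq, abs_of_nonneg (by linarith)]; linarith
        exact absurd (hball this) (not_lt.mpr hz.2)
      linarith
    -- but ψ is strictly increasing up to r₁, contradiction
    have hPpos := key r₁ hr₁U.1 hr₁lt.le hbelow
    have hmono : StrictMonoOn ψ (Ioc (0:ℝ) r₁) := by
      apply strictMonoOn_of_deriv_pos (convex_Ioc _ _)
      · intro x hx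
        have hxU : x ∈ U := ⟨hx.1, lt_of_le_of_lt hx.2 hr₁lt⟩
        exact ((Hψ x hxU).differentiableAt.continuousAt).continuousWithinAt
      · intro x hx
        rw [interior_Ioc] at hx
        have h1 : 0 < h x ^ (k + 1) * deriv ψ x := hPpos x hx
        have h2 : 0 < h x := hpos x ⟨hx.1, hx.2.trans hr₁lt⟩
        nlinarith [pow_pos h2 (k + 1)]
    have h1 : ψ (r₁ / 2) < ψ r₁ :=
      hmono ⟨by linarith [hr₁U.1], by linarith [hr₁U.1]⟩ ⟨hr₁U.1, le_rfl⟩ (by linarith [hr₁U.1])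
    have h2 : 0 < ψ (r₁ / 2) := hbelow _ ⟨by linarith [hr₁U.1], by linarith [hr₁U.1]⟩
    linarith
  have hPpos : ∀ r ∈ U, 0 < P r := key R hR le_rfl hψpos
  have hψ'pos : ∀ r ∈ U, 0 < deriv ψ r := by
    intro r hr
    have h1 : 0 < h r ^ (k + 1) * deriv ψ r := hPpos r hr
    have h2 : 0 < h r := hpos r hr
    nlinarith [pow_pos h2 (k + 1)]
  -- the monotone quantity G
  set G : ℝ → ℝ := fun t =>
    h t ^ (j + 1) * P t - ((j : ℝ) + 1) * (h t ^ (j + k + 1) * (deriv h t * ψ t)) with hG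
  have HG : ∀ r ∈ U, HasDerivAt G
      ((((j:ℝ)+1) * h r ^ (j + 1 - 1) * deriv h r) * P r
        + h r ^ (j + 1) * (τ * h r ^ (k + 1) * ψ r / h r ^ 2)
        - ((j : ℝ) + 1) * ((((j:ℝ)+(k:ℝ)+1) * h r ^ (j + k + 1 - 1) * deriv h r) * (deriv h r * ψ r)
            + h r ^ (j + k + 1) * (deriv (deriv h) r * ψ r + deriv h r * deriv ψ r))) r := by
    intro r hr
    have A := ((Hh r hr).pow (j + 1)).mul (HP r hr)
    have B := (((Hh r hr).pow (j + k + 1)).mul ((Hh2 r hr).mul (Hψ r hr))).const_mul ((j : ℝ) + 1)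
    have := A.sub B
    refine this.congr_deriv ?_
    simp only [Pi.pow_apply, Pi.mul_apply]
    push_cast
    ring
  have hDnonneg : ∀ r ∈ U,
      0 ≤ (((j:ℝ)+1) * h r ^ (j + 1 - 1) * deriv h r) * P r
        + h r ^ (j + 1) * (τ * h r ^ (k + 1) * ψ r / h r ^ 2)
        - ((j : ℝ) + 1) * ((((j:ℝ)+(k:ℝ)+1) * h r ^ (j + k + 1 - 1) * deriv h r) * (deriv h r * ψ r)
            + h r ^ (j + k + 1) * (deriv (deriv h) r * ψ r + deriv h r * deriv ψ r)) := by
    intro r hr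
    have hhr : 0 < h r := hpos r hr
    have hhne : h r ≠ 0 := ne_of_gt hhr
    have hψr := hψpos r hr
    have hder' := hder r (hUsub hr)
    have hconc' := hconc r (hUsub hr)
    have he1 : j + 1 - 1 = j := by omega
    have he2 : j + k + 1 - 1 = j + k := by omega
    rw [he1, he2, hP]
    have hkey : (((j:ℝ)+1) * h r ^ j * deriv h r) * (h r ^ (k+1) * deriv ψ r)
        + h r ^ (j + 1) * (τ * h r ^ (k + 1) * ψ r / h r ^ 2)
        - ((j : ℝ) + 1) * ((((j:ℝ)+(k:ℝ)+1) * h r ^ (j + k) * deriv h r) * (deriv h r * ψ r)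
            + h r ^ (j + k + 1) * (deriv (deriv h) r * ψ r + deriv h r * deriv ψ r))
        = ((j:ℝ)+1) * (((k:ℝ)+(j:ℝ)+1) * (h r ^ (j+k) * ψ r * (1 - deriv h r ^ 2))
            + h r ^ (j+k+1) * ψ r * (-(deriv (deriv h) r))) := by
      rw [hτ']
      field_simp
      ring
    rw [hkey]
    have e1 : 0 ≤ 1 - deriv h r ^ 2 := by nlinarith [hder'.1, hder'.2]
    have e2 : (0:ℝ) ≤ h r ^ (j + k) * ψ r * (1 - deriv h r ^ 2) :=
      mul_nonneg (mul_nonneg (pow_nonneg hhr.le _) hψr.le) e1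
    have e3 : (0:ℝ) ≤ h r ^ (j + k + 1) * ψ r * (-(deriv (deriv h) r)) :=
      mul_nonneg (mul_nonneg (pow_nonneg hhr.le _) hψr.le) (by linarith)
    have e4 : (0:ℝ) ≤ ((k:ℝ)+(j:ℝ)+1) := by positivity
    have e5 : (0:ℝ) ≤ ((j:ℝ)+1) := by positivity
    exact mul_nonneg e5 (add_nonneg (mul_nonneg e4 e2) e3)
  have hGmono : MonotoneOn G U := by
    apply monotoneOn_of_deriv_nonneg (convex_Ioo _ _)
    · exact fun x hx => ((HG x hx).differentiableAt.continuousAt).continuousWithinAt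
    · intro x hx
      rw [interior_Ioo] at hx
      exact (HG x hx).differentiableAt.differentiableWithinAt
    · intro x hx
      rw [interior_Ioo] at hx
      rw [(HG x hx).deriv]
      exact hDnonneg x hx
  -- G ≥ 0 on U via the limit at 0
  have hGnonneg : ∀ r ∈ U, 0 ≤ G r := by
    intro r hr
    by_contra hGc
    push_neg at hGc
    have hNB : (𝓝[Ioo (0:ℝ) r] (0:ℝ)).NeBot := by
      rw [← mem_closure_iff_nhdsWithin_neBot, closure_Ioo (ne_of_lt hr.1)]
      exact ⟨le_rfl, hr.1.le⟩
    have hsubIco : Ioo (0:ℝ) r ⊆ Ico 0 R := fun x hx =>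
      ⟨hx.1.le, hx.2.trans hr.2⟩
    have hsubU : Ioo (0:ℝ) r ⊆ U := Ioo_subset_Ioo le_rfl hr.2.le
    have htendh : Tendsto h (𝓝[Ioo (0:ℝ) r] 0) (𝓝 (h 0)) :=
      (hsm.continuousOn 0 ⟨le_rfl, hR⟩).mono hsubIco
    have htendψ : Tendsto ψ (𝓝[Ioo (0:ℝ) r] 0) (𝓝 0) := by
      have h3 : Tendsto ψ (𝓝[Ioo (0:ℝ) r] 0) (𝓝 (ψ 0)) :=
        (hψsm.continuousOn 0 ⟨le_rfl, hR⟩).mono hsubIco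
      rwa [hψ0] at h3
    have htendB : Tendsto (fun s => ((j:ℝ)+1) * h s ^ (j + k + 1) * ψ s)
        (𝓝[Ioo (0:ℝ) r] 0) (𝓝 0) := by
      have := (((htendh.pow (j+k+1)).const_mul ((j:ℝ)+1)).mul htendψ)
      simpa using this
    have hev : ∀ᶠ s in 𝓝[Ioo (0:ℝ) r] 0,
        ((j:ℝ)+1) * h s ^ (j + k + 1) * ψ s < -G r := by
      exact htendB.eventually_lt_const (by linarith)
    obtain ⟨s, hsB, hsmem⟩ := (hev.and self_mem_nhdsWithin).exists
    have hsU : s ∈ U := hsubU hsmem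
    have h1 : G s ≤ G r := hGmono hsU hr hsmem.2.le
    have h2 : G r < G s := by
      have hhs := hpos s hsU
      have hψs := hψpos s hsU
      have hPs : 0 < h s ^ (k + 1) * deriv ψ s := hPpos s hsU
      have hds := hder s (hUsub hsU)
      have hGs : G s = h s ^ (j + 1) * (h s ^ (k + 1) * deriv ψ s)
          - ((j : ℝ) + 1) * (h s ^ (j + k + 1) * (deriv h s * ψ s)) := rfl
      have hb0 : h s ^ (j + k + 1) * (deriv h s * ψ s) ≤ h s ^ (j + k + 1) * ψ s := by
        nlinarith [mul_pos (pow_pos hhs (j+k+1)) hψs, hds.2]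
      have hb1 : ((j:ℝ)+1) * (h s ^ (j + k + 1) * (deriv h s * ψ s))
          ≤ ((j:ℝ)+1) * h s ^ (j + k + 1) * ψ s := by
        have := mul_le_mul_of_nonneg_left hb0 (by positivity : (0:ℝ) ≤ (j:ℝ)+1)
        linarith
      have hpow : 0 < h s ^ (j + 1) * (h s ^ (k + 1) * deriv ψ s) := by positivity
      have hsB' : ((j:ℝ)+1) * h s ^ (j + k + 1) * ψ s < -G r := hsB
      linarith [hGs.le, hGs.ge]
    linarith
  -- conclude
  intro r hr
  have hhr := hpos r hr
  have hψr := hψpos r hr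
  have hGr := hGnonneg r hr
  have hmain : 0 ≤ h r * deriv ψ r - ((j:ℝ)+1) * deriv h r * ψ r := by
    have hGr' : (0:ℝ) ≤ h r ^ (j + 1) * (h r ^ (k + 1) * deriv ψ r)
        - ((j : ℝ) + 1) * (h r ^ (j + k + 1) * (deriv h r * ψ r)) := hGr
    have hfac : h r ^ (j + 1) * (h r ^ (k + 1) * deriv ψ r)
        - ((j : ℝ) + 1) * (h r ^ (j + k + 1) * (deriv h r * ψ r))
        = h r ^ (j + k + 1) * (h r * deriv ψ r - ((j:ℝ)+1) * deriv h r * ψ r) := by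
      ring
    rw [hfac] at hGr'
    have hp : (0:ℝ) < h r ^ (j + k + 1) := pow_pos hhr _
    nlinarith
  constructor
  · push_cast
    linarith
  · rw [div_le_div_iff₀ hhr hψr]
    push_cast
    nlinarith
end

section
/- Let h : (0,R] → ℝ be smooth and positive with 0 < h' ≤ 1 and h'' ≤ 0, and suppose h(r) → 0 as r → 0⁺ with h(r)/r → 1. Define s(r) = ∫_{R/2}^r dt/h(t), so s maps (0,R] onto (-∞, s₀] for some s₀, with inverse r(s). Then for each integer m ≥ 1, the function G(s) := e^{2ms} h²(r(s))/h'(r(s)) - 2(m+1) ∫_{-∞}^s e^{2mt} h²(r(t)) dt satisfies G(s) ≥ 0 for all s ∈ (-∞, s₀]. -/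
open Set Filter Topology MeasureTheory

lemma expc_hasDerivAt (c t : ℝ) (hc : c ≠ 0) :
    HasDerivAt (fun u => Real.exp (c * u) / c) (Real.exp (c * t)) t := by
  have h1 : HasDerivAt (fun u : ℝ => c * u) c t := by
    simpa using (hasDerivAt_id t).const_mul c
  have h2 := h1.exp.div_const c
  simpa [mul_comm, mul_div_assoc, mul_div_cancel_left₀ _ hc] using h2

lemma expc_integrableOn {c : ℝ} (x : ℝ) (hc : 0 < c) :
    IntegrableOn (fun t => Real.exp (c * t)) (Iic x) := by
  have hcont : Continuous fun t => Real.exp (c * t) :=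
    Real.continuous_exp.comp (continuous_const.mul continuous_id)
  refine integrableOn_Iic_of_intervalIntegral_norm_bounded (Real.exp (c * x) / c) x
    (fun i => hcont.integrableOn_Ioc) tendsto_id (Eventually.of_forall fun i => ?_)
  have hFTC : ∫ t in i..x, Real.exp (c * t) =
      Real.exp (c * x) / c - Real.exp (c * i) / c :=
    intervalIntegral.integral_eq_sub_of_hasDerivAt
      (fun t _ => expc_hasDerivAt c t hc.ne') (hcont.intervalIntegrable i x)
  calc ∫ t in i..x, ‖Real.exp (c * t)‖ = ∫ t in i..x, Real.exp (c * t) := by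
        simp [Real.norm_eq_abs, abs_of_pos (Real.exp_pos _)]
    _ ≤ Real.exp (c * x) / c := by
        rw [hFTC]
        nlinarith [div_pos (Real.exp_pos (c * i)) hc]

lemma expc_integral {c : ℝ} (x : ℝ) (hc : 0 < c) :
    ∫ t in Iic x, Real.exp (c * t) = Real.exp (c * x) / c := by
  have htend : Tendsto (fun t => Real.exp (c * t) / c) atBot (𝓝 0) := by
    have h1 : Tendsto (fun t : ℝ => c * t) atBot atBot :=
      Tendsto.const_mul_atBot hc tendsto_id
    simpa using (Real.tendsto_exp_atBot.comp h1).div_const c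
  simpa using MeasureTheory.integral_Iic_of_hasDerivAt_of_tendsto'
    (f := fun t => Real.exp (c * t) / c) (f' := fun t => Real.exp (c * t)) (a := x)
    (fun t _ => expc_hasDerivAt c t hc.ne') (expc_integrableOn x hc) htend

/-- Key monotonicity lemma (nonnegative curvature): with `s(r) = ∫_{R/2}^r dt/h(t)`,
inverse `r(s)`, and `0 < h' ≤ 1`, `h'' ≤ 0`, the function
`G(s) = e^{2ms} h²(r(s))/h'(r(s)) - 2(m+1) ∫_{-∞}^s e^{2mt} h²(r(t)) dt`
is nonnegative on `(-∞, s₀]`. -/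
theorem stmt5 (R s₀ : ℝ) (hR : 0 < R) (m : ℕ) (hm : 1 ≤ m)
    (h : ℝ → ℝ) (hsm : ContDiffOn ℝ (⊤ : ℕ∞) h (Ioc 0 R))
    (hpos : ∀ r ∈ Ioc 0 R, 0 < h r)
    (hder : ∀ r ∈ Ioc 0 R, 0 < deriv h r ∧ deriv h r ≤ 1)
    (hconc : ∀ r ∈ Ioc 0 R, deriv (deriv h) r ≤ 0)
    (hlim : Tendsto (fun r => h r / r) (𝓝[>] 0) (𝓝 1))
    (s : ℝ → ℝ) (hs : ∀ r ∈ Ioc 0 R, s r = ∫ t in (R / 2)..r, 1 / h t)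
    (hs0 : s R = s₀)
    (rs : ℝ → ℝ) (hrs : ∀ r ∈ Ioc 0 R, rs (s r) = r)
    (hsr : ∀ x ∈ Iic s₀, s (rs x) = x ∧ rs x ∈ Ioc 0 R)
    (hint : IntegrableOn (fun t => Real.exp (2 * (m : ℝ) * t) * (h (rs t)) ^ 2)
      (Iic s₀)) :
    ∀ x ∈ Iic s₀,
      0 ≤ Real.exp (2 * (m : ℝ) * x) * (h (rs x)) ^ 2 / deriv h (rs x)
          - 2 * ((m : ℝ) + 1) *
            ∫ t in Iic x, Real.exp (2 * (m : ℝ) * t) * (h (rs t)) ^ 2 := by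
  have hcont : ContinuousOn h (Ioc 0 R) := hsm.continuousOn
  have hinvcont : ContinuousOn (fun t => 1 / h t) (Ioc 0 R) :=
    continuousOn_const.div hcont fun r hr => (hpos r hr).ne'
  have hsub : ∀ {r1 r2 : ℝ}, r1 ∈ Ioc 0 R → r2 ∈ Ioc 0 R → uIcc r1 r2 ⊆ Ioc 0 R := by
    intro r1 r2 h1 h2 t ht
    rw [uIcc] at ht
    exact ⟨lt_of_lt_of_le (lt_min h1.1 h2.1) ht.1, le_trans ht.2 (max_le h1.2 h2.2)⟩
  have hII : ∀ {r1 r2 : ℝ}, r1 ∈ Ioc 0 R → r2 ∈ Ioc 0 R →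
      IntervalIntegrable (fun t => 1 / h t) MeasureTheory.volume r1 r2 := by
    intro r1 r2 h1 h2
    exact (hinvcont.mono (hsub h1 h2)).intervalIntegrable
  have hhalf : R / 2 ∈ Ioc 0 R := ⟨by linarith, by linarith⟩
  -- s r2 - s r1 = ∫_{r1}^{r2} 1/h
  have hsdiff : ∀ {r1 r2 : ℝ}, r1 ∈ Ioc 0 R → r2 ∈ Ioc 0 R →
      s r2 - s r1 = ∫ t in r1..r2, 1 / h t := by
    intro r1 r2 h1 h2
    rw [hs r1 h1, hs r2 h2,
      ← intervalIntegral.integral_add_adjacent_intervals (hII hhalf h1) (hII h1 h2)]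
    ring
  -- s is strictly monotone
  have smono : ∀ {r1 r2 : ℝ}, r1 ∈ Ioc 0 R → r2 ∈ Ioc 0 R → r1 < r2 → s r1 < s r2 := by
    intro r1 r2 h1 h2 hlt
    have hpos' : (0:ℝ) < ∫ t in r1..r2, 1 / h t := by
      refine intervalIntegral.intervalIntegral_pos_of_pos_on (hII h1 h2) ?_ hlt
      intro t ht
      exact div_pos one_pos (hpos t ⟨lt_trans h1.1 ht.1, le_trans ht.2.le h2.2⟩)
    have := hsdiff h1 h2
    linarith
  -- rs is monotone
  have rsmono : ∀ {t x : ℝ}, t ∈ Iic s₀ → x ∈ Iic s₀ → t ≤ x → rs t ≤ rs x := by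
    intro t x ht hx htx
    by_contra hc
    push_neg at hc
    have := smono (hsr x hx).2 (hsr t ht).2 hc
    rw [(hsr x hx).1, (hsr t ht).1] at this
    linarith
  -- differentiability interior facts
  have hdiffAt : ∀ u ∈ Ioo 0 R, ContDiffAt ℝ (⊤ : ℕ∞) h u := fun u hu =>
    hsm.contDiffAt (mem_nhds_iff.2 ⟨Ioo 0 R, Ioo_subset_Ioc_self, isOpen_Ioo, hu⟩)
  have hderivh : ∀ u ∈ Ioo 0 R, HasDerivAt h (deriv h u) u := fun u hu =>
    ((hdiffAt u hu).differentiableAt (by simp)).hasDerivAt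
  have hCD : ContDiffOn ℝ (⊤ : ℕ∞) (deriv h) (Ioo 0 R) :=
    (hsm.mono Ioo_subset_Ioc_self).deriv_of_isOpen isOpen_Ioo (by simp)
  -- deriv h antitone on Ioo 0 R
  have hanti : AntitoneOn (deriv h) (Ioo 0 R) := by
    refine antitoneOn_of_deriv_nonpos (convex_Ioo 0 R) hCD.continuousOn
      ((hCD.differentiableOn (by simp)).mono interior_subset) ?_
    intro u hu
    rw [interior_Ioo] at hu
    exact hconc u (Ioo_subset_Ioc_self hu)
  -- deriv h antitone including right endpoint
  have hanti' : ∀ u ∈ Ioo 0 R, ∀ r2 ∈ Ioc 0 R, u ≤ r2 → deriv h r2 ≤ deriv h u := by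
    intro u hu r2 hr2 hle
    rcases lt_or_eq_of_le hr2.2 with hlt | heq
    · exact hanti hu ⟨hr2.1, hlt⟩ hle
    · subst heq
      have hdR : DifferentiableAt ℝ h r2 := by
        by_contra hcd
        have h1 := (hder r2 ⟨hR, le_rfl⟩).1
        rw [deriv_zero_of_not_differentiableAt hcd] at h1
        exact lt_irrefl 0 h1
      have hslope : Tendsto (slope h r2) (𝓝[<] r2) (𝓝 (deriv h r2)) :=
        ((hasDerivAt_iff_tendsto_slope.1 hdR.hasDerivAt).mono_left
          (nhdsWithin_mono r2 fun y hy => ne_of_lt hy))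
      refine le_of_tendsto hslope ?_
      filter_upwards [Ioo_mem_nhdsLT_of_mem (⟨hu.2, le_rfl⟩ : r2 ∈ Ioc u r2)] with r hr
      have hrR : r < r2 := hr.2
      have hr0 : 0 < r := lt_trans hu.1 hr.1
      obtain ⟨ξ, hξ, hξeq⟩ := exists_deriv_eq_slope h hrR
        (hcont.mono fun y hy => ⟨lt_of_lt_of_le hr0 hy.1, hy.2⟩)
        (fun y hy => (hderivh y ⟨lt_trans hr0 hy.1, hy.2⟩).differentiableAt.differentiableWithinAt)
      have : slope h r2 r = deriv h ξ := by
        rw [hξeq, slope_def_field]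
        rw [div_eq_div_iff (by linarith) (by linarith)]
        ring
      rw [this]
      exact hanti hu ⟨lt_trans hr0 hξ.1, hξ.2⟩ (le_of_lt (lt_trans hr.1 hξ.1))
    -- key pointwise bound: h(rs t) ≤ h(rs x) exp(a (t - x))
  have key : ∀ x ∈ Iic s₀, ∀ t, t ≤ x →
      h (rs t) ≤ h (rs x) * Real.exp (deriv h (rs x) * (t - x)) := by
    intro x hx t htx
    have ht : t ∈ Iic s₀ := le_trans htx hx
    obtain ⟨hsrx, hrx⟩ := hsr x hx
    obtain ⟨hsrt, hrt⟩ := hsr t ht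
    have h12 : rs t ≤ rs x := rsmono ht hx htx
    set r1 := rs t with hr1def
    set r2 := rs x with hr2def
    rcases eq_or_lt_of_le h12 with heq | hlt
    · have htx' : t = x := by rw [← hsrt, ← hsrx, heq]
      subst htx'
      rw [heq]
      simp
    · set a := deriv h r2 with hadef
      have hIccsub : Icc r1 r2 ⊆ Ioc 0 R := fun y hy =>
        ⟨lt_of_lt_of_le hrt.1 hy.1, le_trans hy.2 hrx.2⟩
      have hG : ContinuousOn (fun b => ∫ u in r1..b, 1 / h u) (Icc r1 r2) := by
        have := intervalIntegral.continuousOn_primitive_interval'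
          (hII hrt hrx) left_mem_uIcc
        rwa [uIcc_of_le h12] at this
      have hsc : ContinuousOn s (Icc r1 r2) := by
        refine ((continuousOn_const (c := s r1)).add hG).congr fun y hy => ?_
        have := hsdiff hrt (hIccsub hy)
        show s y = s r1 + ∫ u in r1..y, 1 / h u
        linarith
      have hφc : ContinuousOn (fun r => Real.log (h r) - a * s r) (Icc r1 r2) :=
        ((hcont.mono hIccsub).log fun y hy => (hpos y (hIccsub hy)).ne').sub
          (continuousOn_const.mul hsc)
      have hφd : ∀ u ∈ Ioo r1 r2, HasDerivAt (fun r => Real.log (h r) - a * s r)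
          (deriv h u / h u - a * (1 / h u)) u := by
        intro u hu
        have huO : u ∈ Ioo 0 R := ⟨lt_trans hrt.1 hu.1, lt_of_lt_of_le hu.2 hrx.2⟩
        have hlog : HasDerivAt (fun r => Real.log (h r)) (deriv h u / h u) u :=
          (hderivh u huO).log (hpos u (Ioo_subset_Ioc_self huO)).ne'
        have hF : HasDerivAt (fun r => ∫ v in (R / 2)..r, 1 / h v) (1 / h u) u := by
          refine intervalIntegral.integral_hasDerivAt_right
            (hII hhalf (Ioo_subset_Ioc_self huO))
            ((hinvcont.mono Ioo_subset_Ioc_self).stronglyMeasurableAtFilter isOpen_Ioo u huO)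
            ?_
          exact (hinvcont.mono Ioo_subset_Ioc_self).continuousAt (isOpen_Ioo.mem_nhds huO)
        have hsd : HasDerivAt s (1 / h u) u := by
          refine hF.congr_of_eventuallyEq ?_
          filter_upwards [isOpen_Ioo.mem_nhds huO] with y hy
          exact hs y (Ioo_subset_Ioc_self hy)
        exact hlog.sub (hsd.const_mul a)
      have hmono : MonotoneOn (fun r => Real.log (h r) - a * s r) (Icc r1 r2) := by
        refine monotoneOn_of_deriv_nonneg (convex_Icc r1 r2) hφc
          (fun u hu => by
            rw [interior_Icc] at hu
            exact (hφd u hu).differentiableAt.differentiableWithinAt)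
          (fun u hu => ?_)
        rw [interior_Icc] at hu
        rw [(hφd u hu).deriv]
        have huO : u ∈ Ioo 0 R := ⟨lt_trans hrt.1 hu.1, lt_of_lt_of_le hu.2 hrx.2⟩
        have ha' : a ≤ deriv h u := hanti' u huO r2 hrx hu.2.le
        have hhu : 0 < h u := hpos u (Ioo_subset_Ioc_self huO)
        have : deriv h u / h u - a * (1 / h u) = (deriv h u - a) / h u := by
          field_simp
        rw [this]
        exact div_nonneg (by linarith) hhu.le
      have hφle : Real.log (h r1) - a * s r1 ≤ Real.log (h r2) - a * s r2 :=
        hmono (left_mem_Icc.2 h12) (right_mem_Icc.2 h12) h12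
      rw [hsrt, hsrx] at hφle
      have h1p : 0 < h r1 := hpos r1 hrt
      have h2p : 0 < h r2 := hpos r2 hrx
      calc h r1 = Real.exp (Real.log (h r1)) := (Real.exp_log h1p).symm
        _ ≤ Real.exp (Real.log (h r2) + a * (t - x)) := by
            apply Real.exp_le_exp.2
            nlinarith [hφle]
        _ = h r2 * Real.exp (a * (t - x)) := by
            rw [Real.exp_add, Real.exp_log h2p]
  -- main argument
  intro x hx
  obtain ⟨hsrx, hrx⟩ := hsr x hx
  set ρ := rs x with hρdef
  set a := deriv h ρ with hadef
  have ha0 : 0 < a := (hder ρ hrx).1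
  have ha1 : a ≤ 1 := (hder ρ hrx).2
  have hρp : 0 < h ρ := hpos ρ hrx
  have hm1 : (1 : ℝ) ≤ (m : ℝ) := by exact_mod_cast hm
  set c := 2 * (m : ℝ) + 2 * a with hcdef
  have hc0 : 0 < c := by rw [hcdef]; nlinarith
  have hbound : ∀ t ∈ Iic x, Real.exp (2 * (m : ℝ) * t) * h (rs t) ^ 2 ≤
      (h ρ ^ 2 * Real.exp (-(2 * a * x))) * Real.exp (c * t) := by
    intro t ht
    have hk := key x hx t ht
    have h1 : 0 ≤ h (rs t) := (hpos _ (hsr t (mem_Iic.2 (le_trans (mem_Iic.1 ht) (mem_Iic.1 hx)))).2).le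
    calc Real.exp (2 * (m : ℝ) * t) * h (rs t) ^ 2
        ≤ Real.exp (2 * (m : ℝ) * t) * (h ρ * Real.exp (a * (t - x))) ^ 2 :=
          mul_le_mul_of_nonneg_left (pow_le_pow_left₀ h1 hk 2) (Real.exp_pos _).le
      _ = h ρ ^ 2 * Real.exp (2 * (m : ℝ) * t + (a * (t - x) + a * (t - x))) := by
          rw [mul_pow, sq (Real.exp _), ← Real.exp_add,
            Real.exp_add (2 * (m : ℝ) * t) (a * (t - x) + a * (t - x))]
          ring
      _ = (h ρ ^ 2 * Real.exp (-(2 * a * x))) * Real.exp (c * t) := by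
          have he : 2 * (m : ℝ) * t + (a * (t - x) + a * (t - x)) =
              -(2 * a * x) + c * t := by rw [hcdef]; ring
          rw [he, Real.exp_add]
          ring
  have hint1 : IntegrableOn (fun t => Real.exp (2 * (m : ℝ) * t) * h (rs t) ^ 2) (Iic x) :=
    hint.mono_set (Iic_subset_Iic.2 hx)
  have hint2 : IntegrableOn
      (fun t => (h ρ ^ 2 * Real.exp (-(2 * a * x))) * Real.exp (c * t)) (Iic x) :=
    (expc_integrableOn x hc0).const_mul _
  have hIle : (∫ t in Iic x, Real.exp (2 * (m : ℝ) * t) * h (rs t) ^ 2) ≤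
      Real.exp (2 * (m : ℝ) * x) * h ρ ^ 2 / c := by
    have h1 : (∫ t in Iic x, Real.exp (2 * (m : ℝ) * t) * h (rs t) ^ 2) ≤
        ∫ t in Iic x, (h ρ ^ 2 * Real.exp (-(2 * a * x))) * Real.exp (c * t) :=
      setIntegral_mono_on hint1 hint2 measurableSet_Iic hbound
    have h2 : (∫ t in Iic x, (h ρ ^ 2 * Real.exp (-(2 * a * x))) * Real.exp (c * t)) =
        Real.exp (2 * (m : ℝ) * x) * h ρ ^ 2 / c := by
      rw [MeasureTheory.integral_const_mul, expc_integral x hc0]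
      have he : Real.exp (-(2 * a * x)) * Real.exp (c * x) = Real.exp (2 * (m : ℝ) * x) := by
        rw [← Real.exp_add]
        congr 1
        rw [hcdef]
        ring
      field_simp
      have he' : Real.exp (-(2 * a * x)) * Real.exp (x * c) = Real.exp (2 * x * (m : ℝ)) := by
        rw [mul_comm x c, show 2 * x * (m : ℝ) = 2 * (m : ℝ) * x by ring]; exact he
      nlinarith [he', he, Real.exp_pos (c * x), Real.exp_pos (-(2 * a * x)),
        Real.exp_pos (2 * (m : ℝ) * x)]
    linarith
  rw [sub_nonneg]
  have hP : 0 < Real.exp (2 * (m : ℝ) * x) * h ρ ^ 2 := by positivity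
  have hfin : 2 * ((m : ℝ) + 1) * (Real.exp (2 * (m : ℝ) * x) * h ρ ^ 2 / c) ≤
      Real.exp (2 * (m : ℝ) * x) * h ρ ^ 2 / a := by
    rw [mul_div_assoc' , div_le_div_iff₀ hc0 ha0]
    rw [hcdef]
    nlinarith [hP, ha0, ha1, hm1,
      mul_le_mul_of_nonneg_left ha1
        (mul_nonneg hP.le (le_trans zero_le_one hm1))]
  calc 2 * ((m : ℝ) + 1) * ∫ t in Iic x, Real.exp (2 * (m : ℝ) * t) * h (rs t) ^ 2
      ≤ 2 * ((m : ℝ) + 1) * (Real.exp (2 * (m : ℝ) * x) * h ρ ^ 2 / c) :=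
        mul_le_mul_of_nonneg_left hIle (by nlinarith)
    _ ≤ Real.exp (2 * (m : ℝ) * x) * h ρ ^ 2 / a := hfin
end

section
/- Let m ≥ 1 and let H : (-∞, s₀] → ℝ be continuous and positive with e^{2mt}H(t) integrable. Then the function b(s) = (1/(2m)) e^{ms} ∫_{s₀}^s H(t) dt + (1/(2m)) e^{m(s-2s₀)} ∫_{-∞}^{s₀} e^{2mt}H(t) dt - (1/(2m)) e^{-ms} ∫_{-∞}^s e^{2mt}H(t) dt solves b'' - m²b = e^{ms}H(s), satisfies b(-∞) = 0 and b(s₀) = 0, and b'(s₀) = e^{-ms₀} ∫_{-∞}^{s₀} e^{2mt} H(t) dt > 0. -/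
/-!
Variation of constants: write `b = (e^{Mx} P(x) - e^{-Mx} Q(x)) / (2M)` with `P' = H` and
`Q' = e^{2Mx} H`. The contributions of `P'` and `Q'` to `b'` cancel, so
`b' = (e^{Mx} P + e^{-Mx} Q) / 2` and `b'' = M² b + e^{Mx} H`. Taking
`Q(x) = ∫_{-∞}^x e^{2Mt} H(t) dt` and `P(x) = ∫_{s₀}^x H + e^{-2Ms₀} Q(s₀)` balances the two terms
at `s₀`, giving `b(s₀) = 0` and `b'(s₀) = e^{-Ms₀} Q(s₀) > 0`. As `x → -∞`, `P` stays bounded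
because `H` is integrable, and `|e^{-Mx} Q(x)| ≤ e^{Mx} ∫_{-∞}^{s₀} |H|`.
-/

open Set Filter Topology MeasureTheory

section VariationOfConstants

open Real

variable {M x p : ℝ} {P Q : ℝ → ℝ} {s : Set ℝ}

theorem hasDerivWithinAt_exp_mul (M x : ℝ) :
    HasDerivWithinAt (fun y => exp (M * y)) (exp (M * x) * M) s x := by
  simpa using ((hasDerivAt_id x).const_mul M).exp.hasDerivWithinAt

theorem hasDerivWithinAt_exp_neg_mul (M x : ℝ) :
    HasDerivWithinAt (fun y => exp (-(M * y))) (exp (-(M * x)) * -M) s x := by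
  simpa using ((hasDerivAt_id x).const_mul M).neg.exp.hasDerivWithinAt

theorem exp_neg_mul_mul_exp_two_mul (M x : ℝ) :
    exp (-(M * x)) * exp (2 * M * x) = exp (M * x) := by
  rw [← exp_add]; ring_nf

theorem hasDerivWithinAt_exp_mul_sub_exp_neg_mul (hP : HasDerivWithinAt P p s x)
    (hQ : HasDerivWithinAt Q (exp (2 * M * x) * p) s x) :
    HasDerivWithinAt (fun y => exp (M * y) * P y - exp (-(M * y)) * Q y)
      (M * (exp (M * x) * P x + exp (-(M * x)) * Q x)) s x :=
  (((hasDerivWithinAt_exp_mul M x).mul hP).sub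
    ((hasDerivWithinAt_exp_neg_mul M x).mul hQ)).congr_deriv <| by
      linear_combination (-p) * exp_neg_mul_mul_exp_two_mul M x

theorem hasDerivWithinAt_exp_mul_add_exp_neg_mul (hP : HasDerivWithinAt P p s x)
    (hQ : HasDerivWithinAt Q (exp (2 * M * x) * p) s x) :
    HasDerivWithinAt (fun y => exp (M * y) * P y + exp (-(M * y)) * Q y)
      (M * (exp (M * x) * P x - exp (-(M * x)) * Q x) + 2 * exp (M * x) * p) s x :=
  (((hasDerivWithinAt_exp_mul M x).mul hP).add
    ((hasDerivWithinAt_exp_neg_mul M x).mul hQ)).congr_deriv <| by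
      linear_combination p * exp_neg_mul_mul_exp_two_mul M x

end VariationOfConstants

section IntegralsOverIic

variable {E : Type*} [NormedAddCommGroup E] [NormedSpace ℝ E] [CompleteSpace E]
  {f : ℝ → E} {a x : ℝ}

theorem hasDerivWithinAt_intervalIntegral_Iic (hf : IntegrableOn f (Iic a))
    (hfc : ContinuousOn f (Iic a)) (hx : x ≤ a) :
    HasDerivWithinAt (fun y => ∫ t in a..y, f t) (f x) (Iic a) x := by
  have hfx : IntervalIntegrable f volume a x :=
    (hf.mono_set (by rw [uIcc_of_ge hx]; exact Icc_subset_Iic_self)).intervalIntegrable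
  rcases hx.lt_or_eq with hx | rfl
  · exact (intervalIntegral.integral_hasDerivAt_right hfx
      (ContinuousOn.stronglyMeasurableAtFilter isOpen_Iio (hfc.mono Iio_subset_Iic_self) x hx)
      (hfc.continuousAt (Iic_mem_nhds hx))).hasDerivWithinAt
  · exact intervalIntegral.integral_hasDerivWithinAt_right hfx
      (hfc.stronglyMeasurableAtFilter_nhdsWithin measurableSet_Iic x) (hfc x self_mem_Iic)

theorem hasDerivWithinAt_integral_Iic (hf : IntegrableOn f (Iic a))
    (hfc : ContinuousOn f (Iic a)) (hx : x ≤ a) :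
    HasDerivWithinAt (fun y => ∫ t in Iic y, f t) (f x) (Iic a) x := by
  refine ((hasDerivWithinAt_intervalIntegral_Iic hf hfc hx).const_add
    (∫ t in Iic a, f t)).congr_of_mem (fun y hy => ?_) hx
  exact eq_add_of_sub_eq' (intervalIntegral.integral_Iic_sub_Iic hf
    (hf.mono_set (Iic_subset_Iic.2 hy)))

end IntegralsOverIic

open Real in
theorem tendsto_exp_neg_mul_mul_integral_Iic_atBot {H : ℝ → ℝ} {M a : ℝ} (hM : 0 < M)
    (hH : IntegrableOn H (Iic a)) :
    Tendsto (fun x => exp (-(M * x)) * ∫ t in Iic x, exp (2 * M * t) * H t) atBot (𝓝 0) := by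
  have hbound : ∀ x ≤ a, ‖exp (-(M * x)) * ∫ t in Iic x, exp (2 * M * t) * H t‖ ≤
      exp (M * x) * ∫ t in Iic a, ‖H t‖ := by
    intro x hx
    have hHx : IntegrableOn H (Iic x) := hH.mono_set (Iic_subset_Iic.2 hx)
    calc ‖exp (-(M * x)) * ∫ t in Iic x, exp (2 * M * t) * H t‖
        ≤ exp (-(M * x)) * ∫ t in Iic x, exp (2 * M * x) * ‖H t‖ := by
          rw [norm_mul, Real.norm_of_nonneg (exp_pos _).le]
          gcongr
          refine (norm_integral_le_integral_norm _).trans (integral_mono_of_nonneg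
            (ae_of_all _ fun t => norm_nonneg _) (hHx.norm.const_mul _)
            ((ae_restrict_iff' measurableSet_Iic).2 (ae_of_all _ fun t ht => ?_)))
          dsimp only
          rw [norm_mul, Real.norm_of_nonneg (exp_pos _).le]
          gcongr
          nlinarith [ht.out]
      _ ≤ exp (-(M * x)) * (exp (2 * M * x) * ∫ t in Iic a, ‖H t‖) := by
          rw [integral_const_mul]
          gcongr
          exacts [ae_of_all _ fun t => norm_nonneg _, hH.norm]
      _ = exp (M * x) * ∫ t in Iic a, ‖H t‖ := by
          rw [← mul_assoc, ← exp_add]; ring_nf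
  have hlim : Tendsto (fun x => exp (M * x) * ∫ t in Iic a, ‖H t‖) atBot (𝓝 0) := by
    simpa using (tendsto_exp_atBot.comp (tendsto_id.const_mul_atBot hM)).mul_const _
  exact squeeze_zero_norm' (eventually_atBot.2 ⟨a, hbound⟩) hlim

theorem setIntegral_pos_of_forall_pos {X : Type*} [MeasurableSpace X] {μ : Measure X}
    {s : Set X} {f : X → ℝ} (hs : MeasurableSet s) (hμs : μ s ≠ 0) (hf : IntegrableOn f s μ)
    (hpos : ∀ x ∈ s, 0 < f x) : 0 < ∫ x in s, f x ∂μ := by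
  rw [setIntegral_pos_iff_support_of_nonneg_ae
    ((ae_restrict_iff' hs).2 (ae_of_all _ fun x hx => (hpos x hx).le)) hf,
    inter_eq_right.2 fun x hx => Function.mem_support.2 (hpos x hx).ne']
  exact pos_iff_ne_zero.2 hμs

section RadialSolution

open Real

variable (M s₀ : ℝ) (H : ℝ → ℝ)

noncomputable def weightedTail (x : ℝ) : ℝ := ∫ t in Iic x, exp (2 * M * t) * H t

noncomputable def shiftedPrimitive (x : ℝ) : ℝ :=
  (∫ t in s₀..x, H t) + exp (-(2 * M * s₀)) * weightedTail M H s₀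

noncomputable def radialSolution (x : ℝ) : ℝ :=
  (exp (M * x) * shiftedPrimitive M s₀ H x - exp (-(M * x)) * weightedTail M H x) / (2 * M)

noncomputable def radialSolutionDeriv (x : ℝ) : ℝ :=
  (exp (M * x) * shiftedPrimitive M s₀ H x + exp (-(M * x)) * weightedTail M H x) / 2

variable {M s₀ H}

theorem radialSolution_apply (x : ℝ) :
    radialSolution M s₀ H x =
      1 / (2 * M) * exp (M * x) * (∫ t in s₀..x, H t)
        + 1 / (2 * M) * exp (M * (x - 2 * s₀)) * (∫ t in Iic s₀, exp (2 * M * t) * H t)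
        - 1 / (2 * M) * exp (-(M * x)) * (∫ t in Iic x, exp (2 * M * t) * H t) := by
  have hexp : exp (M * (x - 2 * s₀)) = exp (M * x) * exp (-(2 * M * s₀)) := by
    rw [← exp_add]; ring_nf
  simp only [radialSolution, shiftedPrimitive, weightedTail, hexp]
  ring

theorem radialSolution_self : radialSolution M s₀ H s₀ = 0 := by
  have hexp : exp (M * s₀) * exp (-(2 * M * s₀)) = exp (-(M * s₀)) := by
    rw [← exp_add]; ring_nf
  simp only [radialSolution, shiftedPrimitive, intervalIntegral.integral_same, zero_add,
    ← mul_assoc, hexp, sub_self, zero_div]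

theorem radialSolutionDeriv_self :
    radialSolutionDeriv M s₀ H s₀ = exp (-(M * s₀)) * weightedTail M H s₀ := by
  have hexp : exp (M * s₀) * exp (-(2 * M * s₀)) = exp (-(M * s₀)) := by
    rw [← exp_add]; ring_nf
  simp only [radialSolutionDeriv, shiftedPrimitive, intervalIntegral.integral_same, zero_add,
    ← mul_assoc, hexp]
  ring

variable {x : ℝ}

theorem hasDerivWithinAt_shiftedPrimitive (hH : IntegrableOn H (Iic s₀))
    (hHc : ContinuousOn H (Iic s₀)) (hx : x ≤ s₀) :
    HasDerivWithinAt (shiftedPrimitive M s₀ H) (H x) (Iic s₀) x :=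
  (hasDerivWithinAt_intervalIntegral_Iic hH hHc hx).add_const _

theorem hasDerivWithinAt_weightedTail
    (hint : IntegrableOn (fun t => exp (2 * M * t) * H t) (Iic s₀))
    (hHc : ContinuousOn H (Iic s₀)) (hx : x ≤ s₀) :
    HasDerivWithinAt (weightedTail M H) (exp (2 * M * x) * H x) (Iic s₀) x :=
  hasDerivWithinAt_integral_Iic hint ((by fun_prop : Continuous fun t => exp (2 * M * t))
    |>.continuousOn.mul hHc) hx

theorem hasDerivWithinAt_radialSolution (hM : M ≠ 0)
    (hint : IntegrableOn (fun t => exp (2 * M * t) * H t) (Iic s₀))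
    (hH : IntegrableOn H (Iic s₀)) (hHc : ContinuousOn H (Iic s₀)) (hx : x ≤ s₀) :
    HasDerivWithinAt (radialSolution M s₀ H) (radialSolutionDeriv M s₀ H x) (Iic s₀) x := by
  refine ((hasDerivWithinAt_exp_mul_sub_exp_neg_mul (hasDerivWithinAt_shiftedPrimitive hH hHc hx)
    (hasDerivWithinAt_weightedTail hint hHc hx)).div_const (2 * M)).congr_deriv ?_
  simp only [radialSolutionDeriv]
  field_simp

theorem hasDerivWithinAt_radialSolutionDeriv
    (hint : IntegrableOn (fun t => exp (2 * M * t) * H t) (Iic s₀))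
    (hH : IntegrableOn H (Iic s₀)) (hHc : ContinuousOn H (Iic s₀)) (hx : x ≤ s₀) :
    HasDerivWithinAt (radialSolutionDeriv M s₀ H)
      (M ^ 2 * radialSolution M s₀ H x + exp (M * x) * H x) (Iic s₀) x := by
  refine ((hasDerivWithinAt_exp_mul_add_exp_neg_mul (hasDerivWithinAt_shiftedPrimitive hH hHc hx)
    (hasDerivWithinAt_weightedTail hint hHc hx)).div_const 2).congr_deriv ?_
  simp only [radialSolution]
  field_simp

theorem deriv_deriv_radialSolution (hM : M ≠ 0)
    (hint : IntegrableOn (fun t => exp (2 * M * t) * H t) (Iic s₀))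
    (hH : IntegrableOn H (Iic s₀)) (hHc : ContinuousOn H (Iic s₀)) (hx : x < s₀) :
    deriv (deriv (radialSolution M s₀ H)) x =
      M ^ 2 * radialSolution M s₀ H x + exp (M * x) * H x := by
  have hderiv : deriv (radialSolution M s₀ H) =ᶠ[𝓝 x] radialSolutionDeriv M s₀ H := by
    filter_upwards [Iio_mem_nhds hx] with y hy
    exact ((hasDerivWithinAt_radialSolution hM hint hH hHc hy.le).hasDerivAt
      (Iic_mem_nhds hy)).deriv
  rw [hderiv.deriv_eq]
  exact ((hasDerivWithinAt_radialSolutionDeriv hint hH hHc hx.le).hasDerivAt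
    (Iic_mem_nhds hx)).deriv

theorem tendsto_radialSolution_atBot (hM : 0 < M) (hH : IntegrableOn H (Iic s₀)) :
    Tendsto (radialSolution M s₀ H) atBot (𝓝 0) := by
  have hP : Tendsto (shiftedPrimitive M s₀ H) atBot
      (𝓝 (-(∫ t in Iic s₀, H t) + exp (-(2 * M * s₀)) * weightedTail M H s₀)) := by
    refine ((intervalIntegral_tendsto_integral_Iic s₀ hH tendsto_id).neg.add_const _).congr
      fun x => ?_
    rw [shiftedPrimitive, intervalIntegral.integral_symm x s₀]
    rfl
  have hE : Tendsto (fun x => exp (M * x)) atBot (𝓝 0) :=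
    tendsto_exp_atBot.comp (tendsto_id.const_mul_atBot hM)
  have := ((hE.mul hP).sub (tendsto_exp_neg_mul_mul_integral_Iic_atBot hM hH)).div_const (2 * M)
  rwa [zero_mul, sub_zero, zero_div] at this

end RadialSolution

/-- Explicit solution of `b'' - m²b = e^{ms}H(s)` with `b(-∞) = 0` and `b(s₀) = 0`:
the stated formula solves the ODE, vanishes at `-∞` and at `s₀`, and
`b'(s₀) = e^{-ms₀} ∫_{-∞}^{s₀} e^{2mt}H(t) dt > 0`. -/
theorem stmt8 (m : ℕ) (hm : 1 ≤ m) (s₀ : ℝ) (H : ℝ → ℝ)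
    (hHc : ContinuousOn H (Iic s₀))
    (hHpos : ∀ t ∈ Iic s₀, 0 < H t)
    (hint : IntegrableOn (fun t => Real.exp (2 * (m : ℝ) * t) * H t) (Iic s₀))
    (hint2 : IntegrableOn H (Iic s₀))
    (b : ℝ → ℝ)
    (hb : ∀ x, b x =
        (1 / (2 * (m : ℝ))) * Real.exp ((m : ℝ) * x) * (∫ t in s₀..x, H t)
      + (1 / (2 * (m : ℝ))) * Real.exp ((m : ℝ) * (x - 2 * s₀)) *
          (∫ t in Iic s₀, Real.exp (2 * (m : ℝ) * t) * H t)
      - (1 / (2 * (m : ℝ))) * Real.exp (-((m : ℝ) * x)) *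
          (∫ t in Iic x, Real.exp (2 * (m : ℝ) * t) * H t)) :
    (∀ x < s₀, deriv (deriv b) x - (m : ℝ) ^ 2 * b x = Real.exp ((m : ℝ) * x) * H x) ∧
    Tendsto b atBot (𝓝 0) ∧
    b s₀ = 0 ∧
    derivWithin b (Iic s₀) s₀ =
      Real.exp (-((m : ℝ) * s₀)) * (∫ t in Iic s₀, Real.exp (2 * (m : ℝ) * t) * H t) ∧
    0 < derivWithin b (Iic s₀) s₀ := by
  have hm' : (0 : ℝ) < m := by exact_mod_cast hm
  obtain rfl : b = radialSolution m s₀ H :=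
    funext fun x => (hb x).trans (radialSolution_apply x).symm
  have hderiv : derivWithin (radialSolution m s₀ H) (Iic s₀) s₀ =
      Real.exp (-((m : ℝ) * s₀)) * ∫ t in Iic s₀, Real.exp (2 * (m : ℝ) * t) * H t :=
    ((hasDerivWithinAt_radialSolution hm'.ne' hint hint2 hHc le_rfl).derivWithin
      (uniqueDiffOn_Iic s₀ s₀ self_mem_Iic)).trans radialSolutionDeriv_self
  refine ⟨fun x hx => ?_, tendsto_radialSolution_atBot hm' hint2, radialSolution_self, hderiv, ?_⟩
  · rw [deriv_deriv_radialSolution hm'.ne' hint hint2 hHc hx]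
    ring
  · rw [hderiv]
    exact mul_pos (Real.exp_pos _) (setIntegral_pos_of_forall_pos measurableSet_Iic
      (by simp [Real.volume_Iic]) hint fun t ht => mul_pos (Real.exp_pos _) (hHpos t ht))
end

section
/- Let n ≥ 4, m ≥ 2, τ = m(n-2+m), and b = (-2τ - n + 4)/(2τ + (n-1)(n-4)). Then b(n-1)² + n - 1 + 2τ > 0, and the inequality -(bτ(n-1) + 3τ)²/(b(n-1)² + n - 1 + 2τ) + bτ² + τ(τ - n + 2) + 2τ ≥ 0 holds. -/
/-!
The value of `b` is exactly the one making the quadratic form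
`(b(n-1)² + n-1 + 2τ) X² + 2(bτ(n-1) + 3τ) X Y + (bτ² + τ(τ-n+2) + 2τ) Y²` degenerate:
in its discriminant the `b²` terms cancel, so the discriminant is affine in `b`, and `b` is its root.
Hence the second claim holds with equality, once the leading coefficient, which simplifies to
`4τ(τ-n+1) / (2τ + (n-1)(n-4))`, is known to be positive, which follows from `τ - 2n = (m-2)(n+m) ≥ 0`.
-/

lemma two_mul_le_mul_sub_two_add {x y : ℝ} (hy : 2 ≤ y) (hxy : 0 ≤ x + y) :
    2 * x ≤ y * (x - 2 + y) := by
  nlinarith [mul_nonneg (sub_nonneg.mpr hy) hxy]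

section Reilly

variable {x t b : ℝ}

lemma reilly_leading_coeff_eq (hD : 2 * t + (x - 1) * (x - 4) ≠ 0)
    (hb : b = (-2 * t - x + 4) / (2 * t + (x - 1) * (x - 4))) :
    b * (x - 1) ^ 2 + x - 1 + 2 * t = 4 * t * (t - x + 1) / (2 * t + (x - 1) * (x - 4)) := by
  rw [hb]
  field_simp
  ring

lemma reilly_discriminant_eq_zero (hD : 2 * t + (x - 1) * (x - 4) ≠ 0)
    (hb : b = (-2 * t - x + 4) / (2 * t + (x - 1) * (x - 4))) :
    (b * t * (x - 1) + 3 * t) ^ 2 =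
      (b * (x - 1) ^ 2 + x - 1 + 2 * t) * (b * t ^ 2 + t * (t - x + 2) + 2 * t) := by
  rw [hb]
  field_simp
  ring

end Reilly

/-- Key algebraic inequality for the Reilly-formula argument, case `n ≥ 4`, `m ≥ 2`:
with `τ = m(n-2+m)` and `b = (-2τ-n+4)/(2τ+(n-1)(n-4))`, one has
`b(n-1)² + n-1 + 2τ > 0` and
`-(bτ(n-1)+3τ)²/(b(n-1)²+n-1+2τ) + bτ² + τ(τ-n+2) + 2τ ≥ 0`. -/
theorem stmt13 (n m : ℕ) (hn : 4 ≤ n) (hm : 2 ≤ m) (τ b : ℝ)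
    (hτ : τ = (m : ℝ) * ((n : ℝ) - 2 + (m : ℝ)))
    (hb : b = (-2 * τ - (n : ℝ) + 4) / (2 * τ + ((n : ℝ) - 1) * ((n : ℝ) - 4))) :
    0 < b * ((n : ℝ) - 1) ^ 2 + (n : ℝ) - 1 + 2 * τ ∧
    0 ≤ -(b * τ * ((n : ℝ) - 1) + 3 * τ) ^ 2 /
          (b * ((n : ℝ) - 1) ^ 2 + (n : ℝ) - 1 + 2 * τ)
        + b * τ ^ 2 + τ * (τ - (n : ℝ) + 2) + 2 * τ := by
  have hn4 : (4 : ℝ) ≤ n := by exact_mod_cast hn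
  have hm2 : (2 : ℝ) ≤ m := by exact_mod_cast hm
  have hτn : 2 * (n : ℝ) ≤ τ := hτ ▸ two_mul_le_mul_sub_two_add hm2 (by positivity)
  have hD : 0 < 2 * τ + ((n : ℝ) - 1) * ((n : ℝ) - 4) :=
    add_pos_of_pos_of_nonneg (by linarith) (mul_nonneg (by linarith) (by linarith))
  have hE : 0 < b * ((n : ℝ) - 1) ^ 2 + (n : ℝ) - 1 + 2 * τ := by
    rw [reilly_leading_coeff_eq hD.ne' hb]
    exact div_pos (mul_pos (by linarith) (by linarith)) hD
  refine ⟨hE, le_of_eq ?_⟩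
  rw [neg_div, reilly_discriminant_eq_zero hD.ne' hb, mul_div_cancel_left₀ _ hE.ne']
  ring
end

section
/- Let h : (0,R] → ℝ be smooth positive with h' > 0, h'' ≥ 0, and h' ≥ 1, and h(r)/r → 1 as r → 0⁺. Define s(r) = ∫_{R/2}^r dt/h(t) mapping (0,R] onto (-∞, s₀]. Then for each m ≥ 1, G(s) := e^{2ms} h²(r(s))/h'(r(s)) - 2(m+1) ∫_{-∞}^s e^{2mt}h²(r(t)) dt satisfies G(s) ≤ 0 for all s ∈ (-∞, s₀]. -/
open Set Filter Topology MeasureTheory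

/-- Reversed monotonicity lemma (nonpositive curvature): with `s(r) = ∫_{R/2}^r dt/h(t)`,
inverse `r(s)`, and `h' ≥ 1`, `h'' ≥ 0`, the function
`G(s) = e^{2ms} h²(r(s))/h'(r(s)) - 2(m+1) ∫_{-∞}^s e^{2mt} h²(r(t)) dt`
is nonpositive on `(-∞, s₀]`. -/
theorem stmt19 (R s₀ : ℝ) (hR : 0 < R) (m : ℕ) (hm : 1 ≤ m)
    (h : ℝ → ℝ) (hsm : ContDiffOn ℝ (⊤ : ℕ∞) h (Ioc 0 R))
    (hpos : ∀ r ∈ Ioc 0 R, 0 < h r)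
    (hder : ∀ r ∈ Ioc 0 R, 0 < deriv h r ∧ 1 ≤ deriv h r)
    (hconv : ∀ r ∈ Ioc 0 R, 0 ≤ deriv (deriv h) r)
    (hlim : Tendsto (fun r => h r / r) (𝓝[>] 0) (𝓝 1))
    (s : ℝ → ℝ) (hs : ∀ r ∈ Ioc 0 R, s r = ∫ t in (R / 2)..r, 1 / h t)
    (hs0 : s R = s₀)
    (rs : ℝ → ℝ) (hrs : ∀ r ∈ Ioc 0 R, rs (s r) = r)
    (hsr : ∀ x ∈ Iic s₀, s (rs x) = x ∧ rs x ∈ Ioc 0 R)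
    (hint : IntegrableOn (fun t => Real.exp (2 * (m : ℝ) * t) * (h (rs t)) ^ 2)
      (Iic s₀)) :
    ∀ x ∈ Iic s₀,
      Real.exp (2 * (m : ℝ) * x) * (h (rs x)) ^ 2 / deriv h (rs x)
          - 2 * ((m : ℝ) + 1) *
            (∫ t in Iic x, Real.exp (2 * (m : ℝ) * t) * (h (rs t)) ^ 2) ≤ 0 := by
  set g : ℝ → ℝ := fun t => Real.exp (2 * (m : ℝ) * t) * (h (rs t)) ^ 2 with hgdef
  set F : ℝ → ℝ := fun t => Real.exp (2 * (m : ℝ) * t) * (h (rs t)) ^ 2 / deriv h (rs t)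
    with hFdef
  have hsub : Ioo 0 R ⊆ Ioc 0 R := Ioo_subset_Ioc_self
  have hcont : ContinuousOn h (Ioc 0 R) := hsm.continuousOn
  have hcont1 : ContinuousOn (fun t => 1 / h t) (Ioc 0 R) :=
    continuousOn_const.div hcont fun r hr => (hpos r hr).ne'
  have hR2 : R / 2 ∈ Ioc 0 R := ⟨by linarith, by linarith⟩
  have hII : ∀ a ∈ Ioc 0 R, ∀ b ∈ Ioc 0 R,
      IntervalIntegrable (fun t => 1 / h t) volume a b := by
    intro a ha b hb
    exact (hcont1.mono (Set.ordConnected_Ioc.uIcc_subset ha hb)).intervalIntegrable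
  -- strict monotonicity of s
  have smono : StrictMonoOn s (Ioc 0 R) := by
    intro a ha b hb hab
    have h1 : s a + ∫ t in a..b, 1 / h t = s b := by
      rw [hs a ha, hs b hb]
      exact intervalIntegral.integral_add_adjacent_intervals (hII _ hR2 _ ha) (hII _ ha _ hb)
    have h2 : 0 < ∫ t in a..b, 1 / h t := by
      apply intervalIntegral.intervalIntegral_pos_of_pos_on (hII _ ha _ hb)
      · intro t ht
        exact one_div_pos.2 (hpos t ⟨lt_trans ha.1 ht.1, le_trans ht.2.le hb.2⟩)
      · exact hab
    linarith
  have smem : ∀ r ∈ Ioc 0 R, s r ≤ s₀ := by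
    intro r hr
    rcases eq_or_lt_of_le hr.2 with h1 | h1
    · rw [h1, hs0]
    · exact le_of_lt (hs0 ▸ smono hr ⟨hR, le_refl R⟩ h1)
  have rsmono : MonotoneOn rs (Iic s₀) := by
    intro a ha b hb hab
    by_contra hlt
    push_neg at hlt
    have h1 := smono (hsr b hb).2 (hsr a ha).2 hlt
    rw [(hsr a ha).1, (hsr b hb).1] at h1
    exact absurd h1 (not_lt.2 hab)
  have himg : Ioc 0 R ⊆ rs '' Iic s₀ := fun r hr => ⟨s r, smem r hr, hrs r hr⟩
  have rsIoo : ∀ x < s₀, rs x ∈ Ioo 0 R := by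
    intro x hx
    have hmem := (hsr x hx.le).2
    refine ⟨hmem.1, lt_of_le_of_ne hmem.2 fun hEq => ?_⟩
    have h1 : s (rs x) = s₀ := by rw [hEq, hs0]
    rw [(hsr x hx.le).1] at h1
    exact hx.ne h1
  have rscontAt : ∀ x < s₀, ContinuousAt rs x := by
    intro x hx
    refine continuousAt_of_monotoneOn_of_image_mem_nhds rsmono (Iic_mem_nhds hx) ?_
    exact mem_of_superset (isOpen_Ioo.mem_nhds (rsIoo x hx)) ((hsub.trans himg))
  have rsR : rs s₀ = R := by
    have h1 := hrs R ⟨hR, le_rfl⟩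
    rwa [hs0] at h1
  have rscontW : ContinuousWithinAt rs (Iic s₀) s₀ := by
    refine continuousWithinAt_left_of_monotoneOn_of_image_mem_nhdsWithin rsmono
      self_mem_nhdsWithin ?_
    rw [rsR]
    refine mem_nhdsWithin.2 ⟨Ioi 0, isOpen_Ioi, hR, ?_⟩
    exact fun u hu => himg ⟨hu.1, hu.2⟩
  have rscontOn : ContinuousOn rs (Iic s₀) := by
    intro x hx
    rcases lt_or_eq_of_le (mem_Iic.1 hx) with h1 | h1
    · exact (rscontAt x h1).continuousWithinAt
    · exact h1 ▸ rscontW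
  -- differentiability of h and its derivative
  have hdiffAt : ∀ r ∈ Ioc 0 R, DifferentiableAt ℝ h r := by
    intro r hr
    rcases lt_or_eq_of_le hr.2 with h1 | h1
    · exact (hsm.contDiffAt (Ioc_mem_nhds hr.1 h1)).differentiableAt (by simp)
    · by_contra hnd
      have h2 := deriv_zero_of_not_differentiableAt hnd
      have h3 := (hder r hr).1
      rw [h2] at h3
      exact lt_irrefl 0 h3
  have hUD : UniqueDiffOn ℝ (Ioc 0 R) := uniqueDiffOn_Ioc 0 R
  have hderivEq : ∀ r ∈ Ioc 0 R, derivWithin h (Ioc 0 R) r = deriv h r :=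
    fun r hr => (hdiffAt r hr).derivWithin (hUD r hr)
  have hderivContOn : ContinuousOn (deriv h) (Ioc 0 R) :=
    (hsm.continuousOn_derivWithin hUD (by simp)).congr fun r hr => (hderivEq r hr).symm
  have hsm' : ContDiffOn ℝ (⊤ : ℕ∞) (deriv h) (Ioo 0 R) :=
    (hsm.mono hsub).deriv_of_isOpen isOpen_Ioo (by simp)
  have hD2 : ∀ r ∈ Ioo 0 R, HasDerivAt (deriv h) (deriv (deriv h) r) r := by
    intro r hr
    exact ((hsm'.differentiableOn (by simp)).differentiableAt
      (isOpen_Ioo.mem_nhds hr)).hasDerivAt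
  -- derivative of s
  have hSderiv : ∀ r ∈ Ioo 0 R, HasDerivAt s (1 / h r) r := by
    intro r hr
    have hIoc := hsub hr
    have hch : ContinuousAt h r := (hsm.contDiffAt (Ioc_mem_nhds hr.1 hr.2)).continuousAt
    have hca : ContinuousAt (fun t => 1 / h t) r :=
      continuousAt_const.div hch (hpos r hIoc).ne'
    have hmeas : StronglyMeasurableAtFilter (fun t => 1 / h t) (𝓝 r) :=
      ContinuousOn.stronglyMeasurableAtFilter isOpen_Ioo (hcont1.mono hsub) r hr
    have hS : HasDerivAt (fun u => ∫ t in (R / 2)..u, 1 / h t) (1 / h r) r :=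
      intervalIntegral.integral_hasDerivAt_right (hII _ hR2 _ hIoc) hmeas hca
    apply hS.congr_of_eventuallyEq
    filter_upwards [isOpen_Ioo.mem_nhds hr] with u hu
    exact hs u (hsub hu)
  -- derivative of rs
  have rsderiv : ∀ x < s₀, HasDerivAt rs (h (rs x)) x := by
    intro x hx
    have hr := rsIoo x hx
    have h1 : HasDerivAt s (1 / h (rs x)) (rs x) := hSderiv _ hr
    have h2 : (1 / h (rs x)) ≠ 0 := one_div_ne_zero (hpos _ (hsub hr)).ne'
    have h3 : ∀ᶠ y in 𝓝 x, s (rs y) = y := by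
      filter_upwards [Iio_mem_nhds hx] with y hy
      exact (hsr y (mem_Iio.1 hy).le).1
    have h4 := HasDerivAt.of_local_left_inverse (rscontAt x hx) h1 h2 h3
    rwa [one_div, inv_inv] at h4
  -- continuity of g
  have gcontAt : ∀ t < s₀, ContinuousAt g t := by
    intro t ht
    have h1 : ContinuousAt h (rs t) :=
      (hsm.contDiffAt (Ioc_mem_nhds (rsIoo t ht).1 (rsIoo t ht).2)).continuousAt
    exact ((Real.continuous_exp.comp (continuous_const.mul continuous_id)).continuousAt).mul
      ((h1.comp (rscontAt t ht)).pow 2)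
  have gcontOn : ContinuousOn g (Iio s₀) := fun t ht => (gcontAt t ht).continuousWithinAt
  have hmaps : MapsTo rs (Iic s₀) (Ioc 0 R) := fun x hx => (hsr x hx).2
  have FcontOn : ContinuousOn F (Iic s₀) := by
    apply ContinuousOn.div
    · exact ((Real.continuous_exp.comp (continuous_const.mul continuous_id)).continuousOn).mul
        ((hcont.comp rscontOn hmaps).pow 2)
    · exact hderivContOn.comp rscontOn hmaps
    · intro x hx
      exact (hder _ (hmaps hx)).1.ne'
  -- key monotonicity inequality
  have key : ∀ y x : ℝ, y ≤ x → x ≤ s₀ → F x ≤ F y + 2 * ((m : ℝ) + 1) * ∫ u in y..x, g u := by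
    intro y x hyx hxs
    rcases eq_or_lt_of_le hyx with rfl | hlt
    · simp
    set Φ : ℝ → ℝ := fun t => ∫ u in y..t, g u with hΦdef
    have huIcc : uIcc y x = Icc y x := uIcc_of_le hyx
    have hIccsub : Icc y x ⊆ Iic s₀ := fun t ht => le_trans ht.2 hxs
    have gintOn : IntegrableOn g (uIcc y x) := by
      rw [huIcc]; exact hint.mono_set hIccsub
    have gint : ∀ t ∈ Icc y x, IntervalIntegrable g volume y t := by
      intro t ht
      apply IntegrableOn.intervalIntegrable
      apply hint.mono_set
      rw [uIcc_of_le ht.1]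
      exact fun u hu => le_trans hu.2 (le_trans ht.2 hxs)
    have Φcont : ContinuousOn Φ (Icc y x) := by
      have := intervalIntegral.continuousOn_primitive_interval (a := y) (b := x) gintOn
      rwa [huIcc] at this
    set H : ℝ → ℝ := fun t => 2 * ((m : ℝ) + 1) * Φ t - F t with hHdef
    have Hd : ∀ t ∈ Ioo y x, ∃ d, HasDerivAt H d t ∧ 0 ≤ d := by
      intro t ht
      have hts : t < s₀ := lt_of_lt_of_le ht.2 hxs
      have hrIoo : rs t ∈ Ioo 0 R := rsIoo t hts
      have hrIoc : rs t ∈ Ioc 0 R := hsub hrIoo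
      have hq1 : 1 ≤ deriv h (rs t) := (hder _ hrIoc).2
      have hq0 : 0 < deriv h (rs t) := (hder _ hrIoc).1
      have hp0 : 0 < h (rs t) := hpos _ hrIoc
      have hw0 : 0 ≤ deriv (deriv h) (rs t) := hconv _ hrIoc
      have hrs' : HasDerivAt rs (h (rs t)) t := rsderiv t hts
      have hcomph : HasDerivAt (fun u => h (rs u)) (deriv h (rs t) * h (rs t)) t :=
        ((hdiffAt _ hrIoc).hasDerivAt).comp t hrs'
      have hcompq : HasDerivAt (fun u => deriv h (rs u))
          (deriv (deriv h) (rs t) * h (rs t)) t := (hD2 _ hrIoo).comp t hrs'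
      have hlin : HasDerivAt (fun u : ℝ => 2 * (m : ℝ) * u) (2 * (m : ℝ)) t := by
        simpa using (hasDerivAt_id t).const_mul (2 * (m : ℝ))
      have hexp : HasDerivAt (fun u => Real.exp (2 * (m : ℝ) * u))
          (Real.exp (2 * (m : ℝ) * t) * (2 * (m : ℝ))) t := hlin.exp
      have hpow : HasDerivAt (fun u => (h (rs u)) ^ 2)
          (2 * (h (rs t)) ^ 1 * (deriv h (rs t) * h (rs t))) t := by
        simpa using hcomph.fun_pow 2
      have hA : HasDerivAt (fun u => Real.exp (2 * (m : ℝ) * u) * (h (rs u)) ^ 2)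
          (Real.exp (2 * (m : ℝ) * t) * (2 * (m : ℝ)) * (h (rs t)) ^ 2
            + Real.exp (2 * (m : ℝ) * t) * (2 * (h (rs t)) ^ 1 * (deriv h (rs t) * h (rs t)))) t :=
        hexp.mul hpow
      have hF' : HasDerivAt F
          (((Real.exp (2 * (m : ℝ) * t) * (2 * (m : ℝ)) * (h (rs t)) ^ 2
            + Real.exp (2 * (m : ℝ) * t) * (2 * (h (rs t)) ^ 1 * (deriv h (rs t) * h (rs t))))
              * deriv h (rs t)
            - Real.exp (2 * (m : ℝ) * t) * (h (rs t)) ^ 2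
              * (deriv (deriv h) (rs t) * h (rs t))) / (deriv h (rs t)) ^ 2) t :=
        hA.div hcompq hq0.ne'
      have hΦ' : HasDerivAt Φ (g t) t := by
        apply intervalIntegral.integral_hasDerivAt_right (gint t ⟨ht.1.le, ht.2.le⟩)
        · exact ContinuousOn.stronglyMeasurableAtFilter isOpen_Iio gcontOn t hts
        · exact gcontAt t hts
      refine ⟨_, (hΦ'.const_mul (2 * ((m : ℝ) + 1))).sub hF', ?_⟩
      rw [sub_nonneg]
      rw [div_le_iff₀ (by positivity)]
      have hgt : g t = Real.exp (2 * (m : ℝ) * t) * (h (rs t)) ^ 2 := rfl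
      have t1 : 0 ≤ 2 * (m : ℝ) * (Real.exp (2 * (m : ℝ) * t) * (h (rs t)) ^ 2)
          * deriv h (rs t) * (deriv h (rs t) - 1) := by
        have hm0 : (0 : ℝ) ≤ (m : ℝ) := Nat.cast_nonneg m
        have := Real.exp_pos (2 * (m : ℝ) * t)
        have h2 : (0 : ℝ) ≤ 2 * (m : ℝ) * (Real.exp (2 * (m : ℝ) * t) * (h (rs t)) ^ 2)
            * deriv h (rs t) := by positivity
        exact mul_nonneg h2 (sub_nonneg.2 hq1)
      have t2 : 0 ≤ Real.exp (2 * (m : ℝ) * t) * (h (rs t)) ^ 3 * deriv (deriv h) (rs t) := by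
        have := Real.exp_pos (2 * (m : ℝ) * t)
        have h2 : (0 : ℝ) ≤ Real.exp (2 * (m : ℝ) * t) * (h (rs t)) ^ 3 := by positivity
        exact mul_nonneg h2 hw0
      rw [hgt]
      nlinarith [t1, t2]
    have Hcont : ContinuousOn H (Icc y x) :=
      (continuousOn_const.mul Φcont).sub (FcontOn.mono hIccsub)
    have Hdiff : DifferentiableOn ℝ H (interior (Icc y x)) := by
      rw [interior_Icc]
      intro t ht
      exact ((Hd t ht).choose_spec.1).differentiableAt.differentiableWithinAt
    have Hmono : MonotoneOn H (Icc y x) := by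
      apply monotoneOn_of_deriv_nonneg (convex_Icc y x) Hcont Hdiff
      rw [interior_Icc]
      intro t ht
      obtain ⟨d, hd, hd0⟩ := Hd t ht
      rw [hd.deriv]
      exact hd0
    have h1 := Hmono ⟨le_rfl, hyx⟩ ⟨hyx, le_rfl⟩ hyx
    have hΦy : Φ y = 0 := intervalIntegral.integral_same
    simp only [hHdef, hΦy, mul_zero] at h1
    linarith
  -- reformulate with Iic integrals
  have key2 : ∀ x, x ≤ s₀ → ∀ y, y ≤ x →
      F x - 2 * ((m : ℝ) + 1) * (∫ t in Iic x, g t) ≤ F y := by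
    intro x hx y hy
    have hIx : IntegrableOn g (Iic x) := hint.mono_set (Iic_subset_Iic.2 hx)
    have hIy : IntegrableOn g (Iic y) := hint.mono_set (Iic_subset_Iic.2 (hy.trans hx))
    have h1 := key y x hy hx
    have h2 : (∫ u in y..x, g u) = (∫ t in Iic x, g t) - ∫ t in Iic y, g t :=
      (intervalIntegral.integral_Iic_sub_Iic hIy hIx).symm
    have h3 : 0 ≤ ∫ t in Iic y, g t := by
      apply setIntegral_nonneg measurableSet_Iic
      intro u _
      have := Real.exp_pos (2 * (m : ℝ) * u)
      positivity
    have hm1 : (0 : ℝ) ≤ 2 * ((m : ℝ) + 1) := by positivity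
    have h4 : 0 ≤ 2 * ((m : ℝ) + 1) * ∫ t in Iic y, g t := mul_nonneg hm1 h3
    rw [h2] at h1
    linarith
  -- rs tends to 0 as y → -∞
  have hrs_small : ∀ ε ∈ Ioc 0 R, ∀ y, y < s ε → y ≤ s₀ → rs y < ε := by
    intro ε hε y hy hys
    by_contra hge
    push_neg at hge
    have h2 : s ε ≤ s (rs y) := smono.monotoneOn hε (hsr y hys).2 hge
    rw [(hsr y hys).1] at h2
    exact absurd hy (not_lt.2 h2)
  have hsq0 : Tendsto (fun y => (h (rs y)) ^ 2) atBot (𝓝 0) := by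
    have h0 : Tendsto h (𝓝[>] 0) (𝓝 0) := by
      have h1 : Tendsto (fun r : ℝ => h r / r * r) (𝓝[>] 0) (𝓝 (1 * 0)) :=
        hlim.mul (tendsto_id.mono_left nhdsWithin_le_nhds)
      rw [one_mul] at h1
      apply h1.congr'
      filter_upwards [self_mem_nhdsWithin] with r (hr : r ∈ Ioi 0)
      exact div_mul_cancel₀ (h r) (ne_of_gt hr)
    have h2 : Tendsto rs atBot (𝓝[>] 0) := by
      rw [tendsto_nhdsWithin_iff]
      constructor
      · rw [tendsto_order]
        constructor
        · intro a ha
          filter_upwards [eventually_le_atBot s₀] with y hy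
          exact lt_trans ha (hsr y hy).2.1
        · intro a ha
          have hε : min a R ∈ Ioc 0 R := ⟨lt_min ha hR, min_le_right _ _⟩
          filter_upwards [eventually_le_atBot (min (s (min a R) - 1) s₀)] with y hy
          have hy1 : y < s (min a R) :=
            lt_of_le_of_lt (hy.trans (min_le_left _ _)) (by linarith)
          have hy2 : y ≤ s₀ := hy.trans (min_le_right _ _)
          exact lt_of_lt_of_le (hrs_small _ hε y hy1 hy2) (min_le_left a R)
      · filter_upwards [eventually_le_atBot s₀] with y hy
        exact (hsr y hy).2.1
    have h3 : Tendsto (fun y => h (rs y)) atBot (𝓝 0) := h0.comp h2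
    have h4 := h3.pow 2
    simpa using h4
  have Ftendsto : Tendsto F atBot (𝓝 0) := by
    apply squeeze_zero'
    · filter_upwards [eventually_le_atBot s₀] with y hy
      have hmem := (hsr y hy).2
      have hq := (hder _ hmem).1
      have := Real.exp_pos (2 * (m : ℝ) * y)
      have hp := hpos _ hmem
      exact div_nonneg (by positivity) hq.le
    · filter_upwards [eventually_le_atBot (min s₀ 0)] with y hy
      have hys : y ≤ s₀ := hy.trans (min_le_left _ _)
      have hy0 : y ≤ 0 := hy.trans (min_le_right _ _)
      have hmem := (hsr y hys).2
      have hq := hder _ hmem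
      have hexp1 : Real.exp (2 * (m : ℝ) * y) ≤ 1 := by
        apply Real.exp_le_one_iff.2
        have hm0 : (0 : ℝ) ≤ 2 * (m : ℝ) := by positivity
        exact mul_nonpos_of_nonneg_of_nonpos hm0 hy0
      have hstep1 : F y ≤ Real.exp (2 * (m : ℝ) * y) * (h (rs y)) ^ 2 := by
        apply div_le_self (by positivity) hq.2
      calc F y ≤ Real.exp (2 * (m : ℝ) * y) * (h (rs y)) ^ 2 := hstep1
        _ ≤ 1 * (h (rs y)) ^ 2 := by
            apply mul_le_mul_of_nonneg_right hexp1 (sq_nonneg _)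
        _ = (h (rs y)) ^ 2 := one_mul _
    · exact hsq0
  -- conclusion
  intro x hx
  have h1 : ∀ᶠ y in atBot, F x - 2 * ((m : ℝ) + 1) * (∫ t in Iic x, g t) ≤ F y := by
    filter_upwards [eventually_le_atBot x] with y hy
    exact key2 x hx y hy
  have h2 := ge_of_tendsto Ftendsto h1
  exact h2
end
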